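/- Let S and A be nonempty finite sets and let 𝒫 ⊆ Δ(S)^{S×A} be a compact (not necessarily convex) uncertainty set. The following three statements are equivalent: (1) 𝒫 is weakly s-tractable; (2) for every stationary policy π ∈ Δ(A)^S, every next-state-independent r ∈ ℝ^{S×A×S} and every γ ∈ [0,1), there exists P̂ ∈ 𝒫 such that u^π = v^{π,P̂}; (3) 𝒫 satisfies the weak SSP. -/
import Mathlib


open scoped BigOperators

namespace RMDP

variable {S A : Type*} [Fintype S] [Fintype A]

def IsKernel (P : S → A → S → ℝ) : Prop := ∀ s a, P s a ∈ stdSimplex ℝ S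

def IsPolicy (π : S → A → ℝ) : Prop := ∀ s, π s ∈ stdSimplex ℝ A

def NextStateIndep (r : S → A → S → ℝ) : Prop :=
  ∀ (s : S) (a : A) (s' s'' : S), r s a s' = r s a s''

noncomputable def minOver {K : Type*} (K0 : Set K) (f : K → ℝ) : ℝ := sInf (f '' K0)

noncomputable def maxOver {K : Type*} (K0 : Set K) (f : K → ℝ) : ℝ := sSup (f '' K0)

noncomputable def TpiP (π : S → A → ℝ) (r : S → A → S → ℝ) (γ : ℝ)
    (P : S → A → S → ℝ) (v : S → ℝ) : S → ℝ :=
  fun s => ∑ a, π s a * ∑ s', P s a s' * (r s a s' + γ * v s')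

noncomputable def Tpi (US : Set (S → A → S → ℝ)) (π : S → A → ℝ)
    (r : S → A → S → ℝ) (γ : ℝ) (v : S → ℝ) : S → ℝ :=
  fun s => minOver US (fun P => ∑ a, π s a * ∑ s', P s a s' * (r s a s' + γ * v s'))

noncomputable def TpiHat (US : Set (S → A → S → ℝ)) (π : S → A → ℝ)
    (r : S → A → S → ℝ) (γ : ℝ) (v : S → ℝ) : S → ℝ :=
  fun s => ∑ a, π s a * minOver US (fun P => ∑ s', P s a s' * (r s a s' + γ * v s'))

noncomputable def Topt (US : Set (S → A → S → ℝ)) (r : S → A → S → ℝ) (γ : ℝ)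
    (v : S → ℝ) : S → ℝ :=
  fun s => maxOver (stdSimplex ℝ A)
    (fun p => minOver US (fun P => ∑ a, p a * ∑ s', P s a s' * (r s a s' + γ * v s')))

def IsHPolicy (π : List (S × A) → S → A → ℝ) : Prop := ∀ h s, π h s ∈ stdSimplex ℝ A

noncomputable def expRHH (π : List (S × A) → S → A → ℝ)
    (Q : List (S × A) → S → A → S → ℝ) (r : S → A → S → ℝ) :
    ℕ → List (S × A) → S → ℝ
  | 0, h, s => ∑ a, π h s a * ∑ s', Q (h ++ [(s, a)]) s a s' * r s a s'
  | (t + 1), h, s =>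
      ∑ a, π h s a * ∑ s', Q (h ++ [(s, a)]) s a s' * expRHH π Q r t (h ++ [(s, a)]) s'

noncomputable def vHH (π : List (S × A) → S → A → ℝ)
    (Q : List (S × A) → S → A → S → ℝ) (r : S → A → S → ℝ) (γ : ℝ) (s : S) : ℝ :=
  ∑' t : ℕ, γ ^ t * expRHH π Q r t [] s

def STractable (US : Set (S → A → S → ℝ)) : Prop :=
  ∀ π : S → A → ℝ, IsPolicy π →
    ∀ (r : S → A → S → ℝ) (γ : ℝ), 0 ≤ γ → γ < 1 →
      ∀ v : (S → A → S → ℝ) → S → ℝ, (∀ P ∈ US, TpiP π r γ P (v P) = v P) →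
        ∀ u : S → ℝ, Tpi US π r γ u = u →
          ∀ μ ∈ stdSimplex ℝ S,
            minOver US (fun P => ∑ s, μ s * v P s) = ∑ s, μ s * u s

def SATractable (US : Set (S → A → S → ℝ)) : Prop :=
  ∀ π : S → A → ℝ, IsPolicy π →
    ∀ (r : S → A → S → ℝ) (γ : ℝ), 0 ≤ γ → γ < 1 →
      ∀ v : (S → A → S → ℝ) → S → ℝ, (∀ P ∈ US, TpiP π r γ P (v P) = v P) →
        ∀ uhat : S → ℝ, TpiHat US π r γ uhat = uhat →
          ∀ μ ∈ stdSimplex ℝ S,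
            minOver US (fun P => ∑ s, μ s * v P s) = ∑ s, μ s * uhat s

def WeakSTractable (US : Set (S → A → S → ℝ)) : Prop :=
  ∀ π : S → A → ℝ, IsPolicy π →
    ∀ (r : S → A → S → ℝ), NextStateIndep r → ∀ γ : ℝ, 0 ≤ γ → γ < 1 →
      ∀ v : (S → A → S → ℝ) → S → ℝ, (∀ P ∈ US, TpiP π r γ P (v P) = v P) →
        ∀ u : S → ℝ, Tpi US π r γ u = u →
          ∀ μ ∈ stdSimplex ℝ S,
            minOver US (fun P => ∑ s, μ s * v P s) = ∑ s, μ s * u s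

def WeakSATractable (US : Set (S → A → S → ℝ)) : Prop :=
  ∀ π : S → A → ℝ, IsPolicy π →
    ∀ (r : S → A → S → ℝ), NextStateIndep r → ∀ γ : ℝ, 0 ≤ γ → γ < 1 →
      ∀ v : (S → A → S → ℝ) → S → ℝ, (∀ P ∈ US, TpiP π r γ P (v P) = v P) →
        ∀ uhat : S → ℝ, TpiHat US π r γ uhat = uhat →
          ∀ μ ∈ stdSimplex ℝ S,
            minOver US (fun P => ∑ s, μ s * v P s) = ∑ s, μ s * uhat s

def SSPs (US : Set (S → A → S → ℝ)) : Prop :=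
  ∀ V : S → A → S → ℝ, ∃ Pstar ∈ US, ∀ s : S, ∀ P ∈ US,
    (∑ a, ∑ s', Pstar s a s' * V s a s') ≤ ∑ a, ∑ s', P s a s' * V s a s'

def SSPsa (US : Set (S → A → S → ℝ)) : Prop :=
  ∀ V : S → A → S → ℝ, ∃ Pstar ∈ US, ∀ (s : S) (a : A), ∀ P ∈ US,
    (∑ s', Pstar s a s' * V s a s') ≤ ∑ s', P s a s' * V s a s'

def WeakSSPs (US : Set (S → A → S → ℝ)) : Prop :=
  ∀ π : S → A → ℝ, IsPolicy π → ∀ V : S → ℝ, ∃ Pstar ∈ US, ∀ s : S, ∀ P ∈ US,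
    (∑ a, π s a * ∑ s', Pstar s a s' * V s') ≤ ∑ a, π s a * ∑ s', P s a s' * V s'

def WeakSSPsa (US : Set (S → A → S → ℝ)) : Prop :=
  ∀ V : S → ℝ, ∃ Pstar ∈ US, ∀ (s : S) (a : A), ∀ P ∈ US,
    (∑ s', Pstar s a s' * V s') ≤ ∑ s', P s a s' * V s'


/-- Feasibility of `u^π` for next-state-independent rewards. -/
def WeakSFeasible {S A : Type*} [Fintype S] [Fintype A] (US : Set (S → A → S → ℝ)) : Prop :=
  ∀ π : S → A → ℝ, IsPolicy π →
    ∀ r : S → A → S → ℝ, NextStateIndep r → ∀ γ : ℝ, 0 ≤ γ → γ < 1 →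
      ∀ u : S → ℝ, Tpi US π r γ u = u → ∃ Phat ∈ US, TpiP π r γ Phat u = u


-- ### Auxiliary lemmas

lemma minOver_eq_of_min {K : Type*} {K0 : Set K} {f : K → ℝ} {P0 : K} (hP0 : P0 ∈ K0)
    (hmin : ∀ P ∈ K0, f P0 ≤ f P) : minOver K0 f = f P0 := by
  refine le_antisymm (csInf_le ⟨f P0, ?_⟩ ⟨P0, hP0, rfl⟩) (le_csInf ⟨f P0, P0, hP0, rfl⟩ ?_) <;>
    · rintro x ⟨P, hP, rfl⟩; exact hmin P hP

lemma le_minOver {K : Type*} {K0 : Set K} (hne : K0.Nonempty) {f : K → ℝ} {b : ℝ}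
    (h : ∀ P ∈ K0, b ≤ f P) : b ≤ minOver K0 f := by
  refine le_csInf (hne.image f) ?_
  rintro x ⟨P, hP, rfl⟩; exact h P hP

lemma minOver_le {K : Type*} {K0 : Set K} {f : K → ℝ} (hbdd : BddBelow (f '' K0)) {P : K}
    (hP : P ∈ K0) : minOver K0 f ≤ f P := csInf_le hbdd ⟨P, hP, rfl⟩

lemma cont_lin (s : S) (c : A → S → ℝ) (w : A → ℝ) :
    Continuous fun P : S → A → S → ℝ => ∑ a, w a * ∑ s', P s a s' * c a s' := by
  refine continuous_finset_sum _ fun a _ => Continuous.mul continuous_const ?_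
  refine continuous_finset_sum _ fun s' _ => Continuous.mul ?_ continuous_const
  exact (continuous_apply s').comp ((continuous_apply a).comp (continuous_apply s))

lemma weighted_le {π : S → A → ℝ} (hπ : IsPolicy π) {P : S → A → S → ℝ} (hP : IsKernel P)
    {g : S → ℝ} {D : ℝ} (hg : ∀ s', g s' ≤ D) (s : S) :
    ∑ a, π s a * ∑ s', P s a s' * g s' ≤ D := by
  have inner : ∀ a, ∑ s', P s a s' * g s' ≤ D := by
    intro a
    calc ∑ s', P s a s' * g s' ≤ ∑ s', P s a s' * D :=
          Finset.sum_le_sum fun s' _ => mul_le_mul_of_nonneg_left (hg s') ((hP s a).1 s')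
      _ = D := by rw [← Finset.sum_mul, (hP s a).2, one_mul]
  calc ∑ a, π s a * ∑ s', P s a s' * g s' ≤ ∑ a, π s a * D :=
        Finset.sum_le_sum fun a _ => mul_le_mul_of_nonneg_left (inner a) ((hπ s).1 a)
    _ = D := by rw [← Finset.sum_mul, (hπ s).2, one_mul]

lemma TpiP_sub (π : S → A → ℝ) (r : S → A → S → ℝ) (γ : ℝ) (P : S → A → S → ℝ)
    (v w : S → ℝ) (s : S) :
    TpiP π r γ P v s - TpiP π r γ P w s
      = ∑ a, π s a * ∑ s', P s a s' * (γ * (v s' - w s')) := by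
  simp only [TpiP, ← Finset.sum_sub_distrib, ← mul_sub]
  refine Finset.sum_congr rfl fun a _ => ?_
  congr 1
  refine Finset.sum_congr rfl fun s' _ => ?_
  ring

lemma TpiP_mono {π : S → A → ℝ} (hπ : IsPolicy π) (r : S → A → S → ℝ) {γ : ℝ} (hγ0 : 0 ≤ γ)
    {P : S → A → S → ℝ} (hP : IsKernel P) {v w : S → ℝ} (hvw : ∀ s', v s' ≤ w s') (s : S) :
    TpiP π r γ P v s ≤ TpiP π r γ P w s := by
  have h1 := weighted_le hπ hP (g := fun s' => γ * (v s' - w s')) (D := 0)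
    (fun s' => mul_nonpos_of_nonneg_of_nonpos hγ0 (by linarith [hvw s'])) s
  have h2 := TpiP_sub π r γ P v w s
  linarith

/-- Comparison principle: a subsolution is below the fixed point. -/
lemma le_fixed [Nonempty S] {π : S → A → ℝ} (hπ : IsPolicy π) (r : S → A → S → ℝ)
    {γ : ℝ} (hγ0 : 0 ≤ γ) (hγ1 : γ < 1) {P : S → A → S → ℝ} (hP : IsKernel P)
    {u w : S → ℝ} (hu : ∀ s, u s ≤ TpiP π r γ P u s) (hw : TpiP π r γ P w = w) (s : S) :
    u s ≤ w s := by
  obtain ⟨s0, -, hs0⟩ := Finset.exists_max_image Finset.univ (fun s => u s - w s)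
    ⟨Classical.arbitrary S, Finset.mem_univ _⟩
  have hMle : ∀ s', u s' - w s' ≤ u s0 - w s0 := fun s' => hs0 s' (Finset.mem_univ _)
  have hbound : TpiP π r γ P u s0 - TpiP π r γ P w s0 ≤ γ * (u s0 - w s0) := by
    rw [TpiP_sub]
    exact weighted_le hπ hP (fun s' => mul_le_mul_of_nonneg_left (hMle s') hγ0) s0
  have hMγ : u s0 - w s0 ≤ γ * (u s0 - w s0) := by
    have h1 := hu s0
    have h2 := congrFun hw s0
    linarith
  have hM0 : u s0 - w s0 ≤ 0 := by nlinarith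
  linarith [hMle s]

lemma fixed_unique [Nonempty S] {π : S → A → ℝ} (hπ : IsPolicy π) (r : S → A → S → ℝ)
    {γ : ℝ} (hγ0 : 0 ≤ γ) (hγ1 : γ < 1) {P : S → A → S → ℝ} (hP : IsKernel P)
    {v w : S → ℝ} (hv : TpiP π r γ P v = v) (hw : TpiP π r γ P w = w) : v = w := by
  funext s
  exact le_antisymm (le_fixed hπ r hγ0 hγ1 hP (fun s => (congrFun hv s).ge) hw s)
    (le_fixed hπ r hγ0 hγ1 hP (fun s => (congrFun hw s).ge) hv s)

lemma exists_fixed [Nonempty S] {π : S → A → ℝ} (hπ : IsPolicy π) (r : S → A → S → ℝ)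
    {γ : ℝ} (hγ0 : 0 ≤ γ) (hγ1 : γ < 1) {P : S → A → S → ℝ} (hP : IsKernel P) :
    ∃ w : S → ℝ, TpiP π r γ P w = w := by
  have hlip : LipschitzWith γ.toNNReal (TpiP π r γ P) := by
    refine LipschitzWith.of_dist_le_mul fun v w => ?_
    rw [dist_pi_le_iff (by positivity)]
    intro s
    rw [Real.dist_eq, abs_le]
    have hc : (γ.toNNReal : ℝ) = γ := Real.coe_toNNReal γ hγ0
    constructor
    · have h2 := TpiP_sub π r γ P w v s
      have := weighted_le hπ hP (g := fun s' => γ * (w s' - v s')) (D := γ * dist v w)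
        (fun s' => mul_le_mul_of_nonneg_left (by
          have := dist_le_pi_dist v w s'
          rw [Real.dist_eq] at this
          cases abs_le.1 this; linarith) hγ0) s
      rw [hc]; linarith
    · have h2 := TpiP_sub π r γ P v w s
      have := weighted_le hπ hP (g := fun s' => γ * (v s' - w s')) (D := γ * dist v w)
        (fun s' => mul_le_mul_of_nonneg_left (by
          have := dist_le_pi_dist v w s'
          rw [Real.dist_eq] at this
          cases abs_le.1 this; linarith) hγ0) s
      rw [hc]; linarith
  have hcw : ContractingWith γ.toNNReal (TpiP π r γ P) :=
    ⟨Real.toNNReal_lt_one.2 hγ1, hlip⟩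
  exact ⟨hcw.fixedPoint _, hcw.fixedPoint_isFixedPt⟩

lemma nsi_sum [Nonempty S] {r : S → A → S → ℝ} (hr : NextStateIndep r)
    {P : S → A → S → ℝ} (hP : IsKernel P) (γ : ℝ) (w : S → ℝ) (s : S) (a : A) :
    ∑ s', P s a s' * (r s a s' + γ * w s')
      = r s a (Classical.arbitrary S) + γ * ∑ s', P s a s' * w s' := by
  have h : ∀ s', P s a s' * (r s a s' + γ * w s')
      = P s a s' * r s a (Classical.arbitrary S) + γ * (P s a s' * w s') := by
    intro s'; rw [hr s a s' (Classical.arbitrary S)]; ring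
  rw [Finset.sum_congr rfl fun s' _ => h s', Finset.sum_add_distrib,
    ← Finset.sum_mul, (hP s a).2, one_mul, ← Finset.mul_sum]

lemma TpiP_nsi [Nonempty S] {π : S → A → ℝ} {r : S → A → S → ℝ}
    (hr : NextStateIndep r) (γ : ℝ) {P : S → A → S → ℝ} (hP : IsKernel P) (w : S → ℝ) (s : S) :
    TpiP π r γ P w s = (∑ a, π s a * r s a (Classical.arbitrary S))
      + γ * ∑ a, π s a * ∑ s', P s a s' * w s' := by
  simp only [TpiP]
  rw [Finset.sum_congr rfl fun a _ => by rw [nsi_sum hr hP γ w s a]]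
  rw [Finset.sum_congr rfl fun a (_ : a ∈ Finset.univ) =>
    (mul_add (π s a) (r s a (Classical.arbitrary S)) (γ * ∑ s', P s a s' * w s')),
    Finset.sum_add_distrib, Finset.mul_sum]
  congr 1
  exact Finset.sum_congr rfl fun a _ => by ring

/-- The linear objective `P ↦ ∑ a, π s a * ∑ s', P s a s' * V s'`. -/
noncomputable def gLin (π : S → A → ℝ) (V : S → ℝ) (s : S) (P : S → A → S → ℝ) : ℝ :=
  ∑ a, π s a * ∑ s', P s a s' * V s'

lemma ssp_to_feas [Nonempty S] {US : Set (S → A → S → ℝ)}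
    (hker : ∀ P ∈ US, IsKernel P) (hssp : WeakSSPs US) : WeakSFeasible US := by
  intro π hπ r hr γ hγ0 hγ1 u hu
  obtain ⟨Pstar, hPs, hmin⟩ := hssp π hπ u
  refine ⟨Pstar, hPs, ?_⟩
  funext s
  have hf : ∀ P ∈ US, TpiP π r γ Pstar u s ≤ TpiP π r γ P u s := by
    intro P hP
    rw [TpiP_nsi hr γ (hker _ hPs), TpiP_nsi hr γ (hker _ hP)]
    have h := hmin s P hP
    have := mul_le_mul_of_nonneg_left h hγ0
    linarith
  have h1 : minOver US (fun P => TpiP π r γ P u s) = TpiP π r γ Pstar u s :=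
    minOver_eq_of_min hPs hf
  have h2 : Tpi US π r γ u s = minOver US (fun P => TpiP π r γ P u s) := rfl
  calc TpiP π r γ Pstar u s = Tpi US π r γ u s := by rw [h2, h1]
    _ = u s := congrFun hu s

lemma feas_to_tract [Nonempty S] {US : Set (S → A → S → ℝ)} (hne : US.Nonempty)
    (hker : ∀ P ∈ US, IsKernel P) (hcpt : IsCompact US) (hfeas : WeakSFeasible US) :
    WeakSTractable US := by
  intro π hπ r hr γ hγ0 hγ1 v hv u hu μ hμ
  obtain ⟨Phat, hPh, hfix⟩ := hfeas π hπ r hr γ hγ0 hγ1 u hu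
  have hvu : v Phat = u := fixed_unique hπ r hγ0 hγ1 (hker _ hPh) (hv _ hPh) hfix
  have hule : ∀ P ∈ US, ∀ s, u s ≤ v P s := by
    intro P hP
    refine le_fixed hπ r hγ0 hγ1 (hker _ hP) (fun s => ?_) (hv _ hP)
    have hbdd : BddBelow ((fun Q => TpiP π r γ Q u s) '' US) :=
      (hcpt.image (cont_lin s (fun a s' => r s a s' + γ * u s') (π s))).bddBelow
    calc u s = Tpi US π r γ u s := (congrFun hu s).symm
      _ ≤ TpiP π r γ P u s := minOver_le hbdd hP
  have hlow : ∀ P ∈ US, ∑ s, μ s * u s ≤ ∑ s, μ s * v P s := fun P hP =>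
    Finset.sum_le_sum fun s _ => mul_le_mul_of_nonneg_left (hule P hP s) (hμ.1 s)
  refine le_antisymm ?_ (le_minOver hne hlow)
  have hbdd : BddBelow ((fun P => ∑ s, μ s * v P s) '' US) :=
    ⟨∑ s, μ s * u s, by rintro x ⟨P, hP, rfl⟩; exact hlow P hP⟩
  calc minOver US (fun P => ∑ s, μ s * v P s) ≤ ∑ s, μ s * v Phat s := minOver_le hbdd hPh
    _ = ∑ s, μ s * u s := by rw [hvu]

lemma tract_to_ssp [Nonempty S] {US : Set (S → A → S → ℝ)} (hne : US.Nonempty)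
    (hker : ∀ P ∈ US, IsKernel P) (hcpt : IsCompact US) (htract : WeakSTractable US) :
    WeakSSPs US := by
  classical
  intro π hπ V
  have hgc : ∀ s, Continuous (gLin π V s) := fun s => cont_lin s (fun _ s' => V s') (π s)
  have hminex : ∀ s : S, ∃ Qs, Qs ∈ US ∧ ∀ P ∈ US, gLin π V s Qs ≤ gLin π V s P := by
    intro s
    obtain ⟨Qs, hQ, hQm⟩ := hcpt.exists_isMinOn hne (hgc s).continuousOn
    exact ⟨Qs, hQ, fun P hP => hQm hP⟩
  choose Q hQmem hQmin using hminex
  set γ : ℝ := 1/2 with hγdef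
  have hγ0 : (0:ℝ) ≤ γ := by norm_num [hγdef]
  have hγ1 : γ < 1 := by norm_num [hγdef]
  set r : S → A → S → ℝ := fun s _ _ => V s - γ * gLin π V s (Q s) with hrdef
  have hr : NextStateIndep r := fun _ _ _ _ => rfl
  have hconst : ∀ s, ∑ a, π s a * r s a (Classical.arbitrary S)
      = V s - γ * gLin π V s (Q s) := by
    intro s
    simp only [hrdef]
    rw [← Finset.sum_mul, (hπ s).2, one_mul]
  have hTpiP : ∀ P, IsKernel P → ∀ w : S → ℝ, ∀ s, TpiP π r γ P w s
      = (V s - γ * gLin π V s (Q s)) + γ * gLin π w s P := by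
    intro P hP w s
    rw [TpiP_nsi hr γ hP, hconst s]
    rfl
  have hVfix : Tpi US π r γ V = V := by
    funext s
    have h1 : minOver US (fun P => TpiP π r γ P V s) = TpiP π r γ (Q s) V s :=
      minOver_eq_of_min (hQmem s) fun P hP => by
        rw [hTpiP P (hker P hP) V s, hTpiP (Q s) (hker _ (hQmem s)) V s]
        have h := hQmin s P hP
        nlinarith
    have h2 : Tpi US π r γ V s = minOver US (fun P => TpiP π r γ P V s) := rfl
    rw [h2, h1, hTpiP (Q s) (hker _ (hQmem s)) V s]
    ring
  have hvex : ∀ P ∈ US, ∃ w : S → ℝ, TpiP π r γ P w = w := fun P hP =>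
    exists_fixed hπ r hγ0 hγ1 (hker P hP)
  set v : (S → A → S → ℝ) → S → ℝ := fun P =>
    if h : ∃ w : S → ℝ, TpiP π r γ P w = w then h.choose else 0 with hvdef
  have hv : ∀ P ∈ US, TpiP π r γ P (v P) = v P := by
    intro P hP
    have h := hvex P hP
    simp only [hvdef, dif_pos h]
    exact h.choose_spec
  have hcard : (0:ℝ) < (Fintype.card S : ℝ) := by exact_mod_cast Fintype.card_pos
  set μ : S → ℝ := fun _ => (Fintype.card S : ℝ)⁻¹ with hμdef
  have hμpos : ∀ s, 0 < μ s := fun s => by simp only [hμdef]; exact inv_pos.2 hcard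
  have hμ : μ ∈ stdSimplex ℝ S := by
    refine ⟨fun s => (hμpos s).le, ?_⟩
    simp only [hμdef]
    rw [Finset.sum_const, Finset.card_univ, nsmul_eq_mul, mul_inv_cancel₀ hcard.ne']
  have htr := htract π hπ r hr γ hγ0 hγ1 v hv V hVfix μ hμ
  have hVle : ∀ P ∈ US, ∀ s, V s ≤ v P s := by
    intro P hP
    refine le_fixed hπ r hγ0 hγ1 (hker P hP) (fun s => ?_) (hv P hP)
    have hbdd : BddBelow ((fun Q' => TpiP π r γ Q' V s) '' US) :=
      (hcpt.image (cont_lin s (fun a s' => r s a s' + γ * V s') (π s))).bddBelow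
    calc V s = Tpi US π r γ V s := (congrFun hVfix s).symm
      _ ≤ TpiP π r γ P V s := minOver_le hbdd hP
  obtain ⟨Pstar, hPstar, hFmin'⟩ := hcpt.exists_isMinOn hne
    (f := fun P => ∑ s, μ s * gLin π V s P)
    (Continuous.continuousOn
      (continuous_finset_sum _ fun s _ => continuous_const.mul (hgc s)))
  have hFmin : ∀ P ∈ US, ∑ s, μ s * gLin π V s Pstar ≤ ∑ s, μ s * gLin π V s P :=
    fun P hP => hFmin' hP
  have hexpand : ∀ P, ∑ s, μ s * ((V s - γ * gLin π V s (Q s)) + γ * gLin π V s P)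
      = (∑ s, μ s * (V s - γ * gLin π V s (Q s))) + γ * ∑ s, μ s * gLin π V s P := by
    intro P
    rw [Finset.mul_sum, ← Finset.sum_add_distrib]
    exact Finset.sum_congr rfl fun s _ => by ring
  have hlow : ∀ P ∈ US,
      (∑ s, μ s * (V s - γ * gLin π V s (Q s))) + γ * ∑ s, μ s * gLin π V s Pstar
        ≤ ∑ s, μ s * v P s := by
    intro P hP
    have h1 : ∀ s, (V s - γ * gLin π V s (Q s)) + γ * gLin π V s P ≤ v P s := by
      intro s
      have hm := TpiP_mono hπ r hγ0 (hker P hP) (hVle P hP) s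
      rw [hTpiP P (hker P hP) V s] at hm
      have h3 := congrFun (hv P hP) s
      linarith
    have h2 : ∑ s, μ s * ((V s - γ * gLin π V s (Q s)) + γ * gLin π V s P)
        ≤ ∑ s, μ s * v P s :=
      Finset.sum_le_sum fun s _ => mul_le_mul_of_nonneg_left (h1 s) (hμpos s).le
    rw [hexpand P] at h2
    have h4 := mul_le_mul_of_nonneg_left (hFmin P hP) hγ0
    linarith
  have hmain : (∑ s, μ s * (V s - γ * gLin π V s (Q s)))
      + γ * ∑ s, μ s * gLin π V s Pstar ≤ ∑ s, μ s * V s := by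
    rw [← htr]
    exact le_minOver hne hlow
  have hsplit : ∑ s, μ s * V s
      = (∑ s, μ s * (V s - γ * gLin π V s (Q s))) + γ * ∑ s, μ s * gLin π V s (Q s) := by
    rw [Finset.mul_sum, ← Finset.sum_add_distrib]
    exact Finset.sum_congr rfl fun s _ => by ring
  have hsum : ∑ s, μ s * gLin π V s Pstar ≤ ∑ s, μ s * gLin π V s (Q s) := by
    rw [hsplit] at hmain
    have hγpos : (0:ℝ) < γ := by norm_num [hγdef]
    nlinarith
  have hnn : ∀ s ∈ Finset.univ, (0:ℝ) ≤ μ s * (gLin π V s Pstar - gLin π V s (Q s)) :=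
    fun s _ => mul_nonneg (hμpos s).le (by linarith [hQmin s Pstar hPstar])
  have hz : ∑ s, μ s * (gLin π V s Pstar - gLin π V s (Q s)) = 0 := by
    have heq : ∑ s, μ s * (gLin π V s Pstar - gLin π V s (Q s))
        = (∑ s, μ s * gLin π V s Pstar) - ∑ s, μ s * gLin π V s (Q s) := by
      rw [← Finset.sum_sub_distrib]
      exact Finset.sum_congr rfl fun s _ => by ring
    refine le_antisymm (by rw [heq]; linarith) (Finset.sum_nonneg hnn)
  have hpt : ∀ s, gLin π V s Pstar ≤ gLin π V s (Q s) := by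
    intro s
    have h0 := (Finset.sum_eq_zero_iff_of_nonneg hnn).1 hz s (Finset.mem_univ s)
    have hμs := hμpos s
    by_contra hcon
    push_neg at hcon
    nlinarith
  refine ⟨Pstar, hPstar, fun s P hP => ?_⟩
  calc (∑ a, π s a * ∑ s', Pstar s a s' * V s') = gLin π V s Pstar := rfl
    _ ≤ gLin π V s (Q s) := hpt s
    _ ≤ gLin π V s P := hQmin s P hP


theorem stmt5 {S A : Type*} [Fintype S] [Fintype A] [Nonempty S] [Nonempty A]
    (US : Set (S → A → S → ℝ)) (hne : US.Nonempty) (hker : ∀ P ∈ US, IsKernel P)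
    (hcpt : IsCompact US) :
    (WeakSTractable US ↔ WeakSFeasible US) ∧ (WeakSFeasible US ↔ WeakSSPs US) :=
  ⟨⟨fun hT => ssp_to_feas hker (tract_to_ssp hne hker hcpt hT),
    fun hF => feas_to_tract hne hker hcpt hF⟩,
    ⟨fun hF => tract_to_ssp hne hker hcpt (feas_to_tract hne hker hcpt hF),
    fun hS => ssp_to_feas hker hS⟩⟩

end RMDP
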